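/- arXiv:2003.11361 — 5 statements merged into one kernel-verified Lean document; each statement's English description precedes it below -/
import Mathlib

section
/- Let X be a topological space and let B be a collection of open subsets of X containing the empty set and closed under finite unions and finite intersections. Regard B as a full subcategory of the category of open subsets of X, equipped with the Grothendieck topology in which a sieve on U ∈ B is a covering sieve if and only if it contains a finite family (U_j)_{j∈J} of members of B with ⋃_{j∈J} U_j = U. Let F be a presheaf of abelian groups on B such that F(∅) = 0 and such that for every U₁, U₂ ∈ B the sequence 0 → F(U₁ ∪ U₂) → F(U₁) ⊕ F(U₂) → F(U₁ ∩ U₂) is exact, where the first map is (restriction, restriction) and the second is the difference of the restrictions. Then F is a sheaf for this Grothendieck topology. -/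
open CategoryTheory TopologicalSpace Opposite


universe w

theorem aux_sheaf_criterion
    {X : Type} [TopologicalSpace X] (B : Set (Opens X))
    (hbot : ⊥ ∈ B)
    (hsup : ∀ U ∈ B, ∀ V ∈ B, U ⊔ V ∈ B)
    (hinf : ∀ U ∈ B, ∀ V ∈ B, U ⊓ V ∈ B)
    (J : GrothendieckTopology (ObjectProperty.FullSubcategory (· ∈ B)))
    (hJ : ∀ (U : ObjectProperty.FullSubcategory (· ∈ B)) (S : Sieve U), S ∈ J U ↔
      ∃ (ι : Type) (_ : Finite ι) (V : ι → ObjectProperty.FullSubcategory (· ∈ B))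
        (hle : ∀ i, (V i).obj ≤ U.obj),
        (∀ i, S.arrows (show V i ⟶ U from ObjectProperty.homMk (homOfLE (hle i)))) ∧ (⨆ i, (V i).obj) = U.obj)
    (Q : (ObjectProperty.FullSubcategory (· ∈ B))ᵒᵖ ⥤ Type w)
    (hQ0 : ∀ s t : Q.obj (op ⟨⊥, hbot⟩), s = t)
    (hQne : Nonempty (Q.obj (op ⟨⊥, hbot⟩)))
    (hQinj : ∀ (U₁ U₂ : ObjectProperty.FullSubcategory (· ∈ B))
      (s t : Q.obj (op (⟨U₁.obj ⊔ U₂.obj, hsup _ U₁.property _ U₂.property⟩ :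
        ObjectProperty.FullSubcategory (· ∈ B)))),
      Q.map (show (U₁ : ObjectProperty.FullSubcategory (· ∈ B)) ⟶ ⟨U₁.obj ⊔ U₂.obj, hsup _ U₁.property _ U₂.property⟩
        from ObjectProperty.homMk (homOfLE le_sup_left)).op s =
        Q.map (show (U₁ : ObjectProperty.FullSubcategory (· ∈ B)) ⟶ ⟨U₁.obj ⊔ U₂.obj, hsup _ U₁.property _ U₂.property⟩
          from ObjectProperty.homMk (homOfLE le_sup_left)).op t →
      Q.map (show (U₂ : ObjectProperty.FullSubcategory (· ∈ B)) ⟶ ⟨U₁.obj ⊔ U₂.obj, hsup _ U₁.property _ U₂.property⟩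
        from ObjectProperty.homMk (homOfLE le_sup_right)).op s =
        Q.map (show (U₂ : ObjectProperty.FullSubcategory (· ∈ B)) ⟶ ⟨U₁.obj ⊔ U₂.obj, hsup _ U₁.property _ U₂.property⟩
          from ObjectProperty.homMk (homOfLE le_sup_right)).op t →
      s = t)
    (hQglue : ∀ (U₁ U₂ : ObjectProperty.FullSubcategory (· ∈ B))
      (a : Q.obj (op U₁)) (b : Q.obj (op U₂)),
      Q.map (show (⟨U₁.obj ⊓ U₂.obj, hinf _ U₁.property _ U₂.property⟩ :
          ObjectProperty.FullSubcategory (· ∈ B)) ⟶ U₁ from ObjectProperty.homMk (homOfLE inf_le_left)).op a =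
        Q.map (show (⟨U₁.obj ⊓ U₂.obj, hinf _ U₁.property _ U₂.property⟩ :
          ObjectProperty.FullSubcategory (· ∈ B)) ⟶ U₂ from ObjectProperty.homMk (homOfLE inf_le_right)).op b →
      ∃ s : Q.obj (op (⟨U₁.obj ⊔ U₂.obj, hsup _ U₁.property _ U₂.property⟩ :
          ObjectProperty.FullSubcategory (· ∈ B))),
        Q.map (show (U₁ : ObjectProperty.FullSubcategory (· ∈ B)) ⟶ ⟨U₁.obj ⊔ U₂.obj, hsup _ U₁.property _ U₂.property⟩
          from ObjectProperty.homMk (homOfLE le_sup_left)).op s = a ∧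
        Q.map (show (U₂ : ObjectProperty.FullSubcategory (· ∈ B)) ⟶ ⟨U₁.obj ⊔ U₂.obj, hsup _ U₁.property _ U₂.property⟩
          from ObjectProperty.homMk (homOfLE le_sup_right)).op s = b) :
    Presieve.IsSheaf J Q := by
  classical
  -- helpers
  have ext : ∀ {U V : ObjectProperty.FullSubcategory (· ∈ B)}, U.obj = V.obj → U = V := by
    rintro ⟨u, hu⟩ ⟨v, hv⟩ h
    dsimp at h
    subst h
    rfl
  have hom_ss : ∀ {V W : ObjectProperty.FullSubcategory (· ∈ B)} (f g : V ⟶ W), f = g :=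
    fun {V W} f g => InducedCategory.hom_ext (Subsingleton.elim _ _)
  have op_ss : ∀ {V W : ObjectProperty.FullSubcategory (· ∈ B)} (f g : op W ⟶ op V), f = g :=
    fun {V W} f g => Quiver.Hom.unop_inj (hom_ss f.unop g.unop)
  have map_eq : ∀ {V W : ObjectProperty.FullSubcategory (· ∈ B)} (f g : V ⟶ W) (s : Q.obj (op W)),
      Q.map f.op s = Q.map g.op s := fun f g s => by rw [hom_ss f g]
  have res_res : ∀ {V₁ V₂ V₃ : ObjectProperty.FullSubcategory (· ∈ B)} (h1 : V₁.obj ≤ V₂.obj)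
      (h2 : V₂.obj ≤ V₃.obj) (s : Q.obj (op V₃)),
      Q.map (show V₁ ⟶ V₂ from ObjectProperty.homMk (homOfLE h1)).op
          (Q.map (show V₂ ⟶ V₃ from ObjectProperty.homMk (homOfLE h2)).op s)
        = Q.map (show V₁ ⟶ V₃ from ObjectProperty.homMk (homOfLE (h1.trans h2))).op s := by
    intro V₁ V₂ V₃ h1 h2 s
    rw [← types_comp_apply (Q.map (show V₂ ⟶ V₃ from ObjectProperty.homMk (homOfLE h2)).op)
      (Q.map (show V₁ ⟶ V₂ from ObjectProperty.homMk (homOfLE h1)).op) s, ← Q.map_comp]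
    exact congrArg (fun g => Q.map g s) (op_ss _ _)
  have fin_succ_sup : ∀ (n : ℕ) (f : Fin (n+1) → Opens X),
      (⨆ i, f i) = f 0 ⊔ ⨆ i : Fin n, f i.succ := by
    intro n f
    apply le_antisymm
    · exact iSup_le fun i => Fin.cases le_sup_left
        (fun j => le_sup_of_le_right (le_iSup (fun k : Fin n => f k.succ) j)) i
    · exact sup_le (le_iSup f 0) (iSup_le fun j => le_iSup f j.succ)
  have sup_mem : ∀ (n : ℕ) (V : Fin n → ObjectProperty.FullSubcategory (· ∈ B)),
      (⨆ i, (V i).obj) ∈ B := by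
    intro n
    induction n with
    | zero => intro V; rw [iSup_of_empty]; exact hbot
    | succ n ih =>
      intro V
      rw [fin_succ_sup n fun i => (V i).obj]
      exact hsup _ (V 0).property _ (ih fun i => V i.succ)
  -- uniqueness
  have un : ∀ (n : ℕ) (V : Fin n → ObjectProperty.FullSubcategory (· ∈ B))
      (W : ObjectProperty.FullSubcategory (· ∈ B)) (hle : ∀ i, (V i).obj ≤ W.obj),
      W.obj ≤ (⨆ i, (V i).obj) → ∀ (s t : Q.obj (op W)),
      (∀ i, Q.map (show V i ⟶ W from ObjectProperty.homMk (homOfLE (hle i))).op s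
          = Q.map (show V i ⟶ W from ObjectProperty.homMk (homOfLE (hle i))).op t) → s = t := by
    intro n
    induction n with
    | zero =>
      intro V W hle hW s t _
      have hWbot : W = ⟨⊥, hbot⟩ := ext (le_bot_iff.mp (by simpa using hW))
      subst hWbot
      exact hQ0 s t
    | succ n ih =>
      intro V W hle hW s t h
      have hWsup : W = ⟨(V 0).obj ⊔ (⟨⨆ i : Fin n, (V i.succ).obj,
          sup_mem n fun i => V i.succ⟩ : ObjectProperty.FullSubcategory (· ∈ B)).obj,
          hsup _ (V 0).property _ (sup_mem n fun i => V i.succ)⟩ :=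
        ext (le_antisymm (hW.trans (le_of_eq (fin_succ_sup n fun i => (V i).obj)))
          (sup_le (hle 0) (iSup_le fun i => hle i.succ)))
      subst hWsup
      apply hQinj (V 0) (⟨⨆ i : Fin n, (V i.succ).obj, sup_mem n fun i => V i.succ⟩ :
        ObjectProperty.FullSubcategory (· ∈ B)) s t
      · exact (map_eq _ _ _).trans ((h 0).trans (map_eq _ _ _))
      · apply ih (fun i => V i.succ)
          (⟨⨆ i : Fin n, (V i.succ).obj, sup_mem n fun i => V i.succ⟩ :
            ObjectProperty.FullSubcategory (· ∈ B))
          (fun i => le_iSup (fun k : Fin n => (V k.succ).obj) i) le_rfl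
        intro i
        exact ((res_res _ _ _).trans (map_eq _ _ _)).trans
          ((h i.succ).trans (((res_res _ _ _).trans (map_eq _ _ _)).symm))
  -- existence
  have exi : ∀ (n : ℕ) (V : Fin n → ObjectProperty.FullSubcategory (· ∈ B))
      (W : ObjectProperty.FullSubcategory (· ∈ B)) (hle : ∀ i, (V i).obj ≤ W.obj),
      W.obj ≤ (⨆ i, (V i).obj) → ∀ (a : ∀ i, Q.obj (op (V i))),
      (∀ i j, Q.map (show (⟨(V i).obj ⊓ (V j).obj,
            hinf _ (V i).property _ (V j).property⟩ : ObjectProperty.FullSubcategory (· ∈ B)) ⟶ V i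
          from ObjectProperty.homMk (homOfLE inf_le_left)).op (a i)
        = Q.map (show (⟨(V i).obj ⊓ (V j).obj,
            hinf _ (V i).property _ (V j).property⟩ : ObjectProperty.FullSubcategory (· ∈ B)) ⟶ V j
          from ObjectProperty.homMk (homOfLE inf_le_right)).op (a j)) →
      ∃ s : Q.obj (op W), ∀ i,
        Q.map (show V i ⟶ W from ObjectProperty.homMk (homOfLE (hle i))).op s = a i := by
    intro n
    induction n with
    | zero =>
      intro V W hle hW a _
      have hWbot : W = ⟨⊥, hbot⟩ := ext (le_bot_iff.mp (by simpa using hW))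
      subst hWbot
      exact ⟨hQne.some, fun i => i.elim0⟩
    | succ n ih =>
      intro V W hle hW a compat
      obtain ⟨s', hs'⟩ := ih (fun i => V i.succ)
        (⟨⨆ i : Fin n, (V i.succ).obj, sup_mem n fun i => V i.succ⟩ :
          ObjectProperty.FullSubcategory (· ∈ B))
        (fun i => le_iSup (fun k : Fin n => (V k.succ).obj) i) le_rfl
        (fun i => a i.succ) (fun i j => compat i.succ j.succ)
      have key : Q.map (show (⟨(V 0).obj ⊓ (⟨⨆ i : Fin n, (V i.succ).obj,
            sup_mem n fun i => V i.succ⟩ : ObjectProperty.FullSubcategory (· ∈ B)).obj,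
            hinf _ (V 0).property _ (sup_mem n fun i => V i.succ)⟩ :
            ObjectProperty.FullSubcategory (· ∈ B)) ⟶ V 0 from ObjectProperty.homMk (homOfLE inf_le_left)).op (a 0)
          = Q.map (show _ ⟶ (⟨⨆ i : Fin n, (V i.succ).obj,
            sup_mem n fun i => V i.succ⟩ : ObjectProperty.FullSubcategory (· ∈ B))
            from ObjectProperty.homMk (homOfLE inf_le_right)).op s' := by
        apply un n (fun j => ⟨(V 0).obj ⊓ (V j.succ).obj,
            hinf _ (V 0).property _ (V j.succ).property⟩)
          (⟨(V 0).obj ⊓ (⟨⨆ i : Fin n, (V i.succ).obj,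
            sup_mem n fun i => V i.succ⟩ : ObjectProperty.FullSubcategory (· ∈ B)).obj,
            hinf _ (V 0).property _ (sup_mem n fun i => V i.succ)⟩ :
            ObjectProperty.FullSubcategory (· ∈ B))
          (fun j => inf_le_inf le_rfl (le_iSup (fun k : Fin n => (V k.succ).obj) j))
          (le_of_eq (inf_iSup_eq _ _))
        intro j
        refine ((res_res _ _ _).trans (map_eq _ _ _)).trans ((compat 0 j.succ).trans ?_)
        refine (congrArg (Q.map (show (⟨(V 0).obj ⊓ (V j.succ).obj,
          hinf _ (V 0).property _ (V j.succ).property⟩ : ObjectProperty.FullSubcategory (· ∈ B)) ⟶ V j.succ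
          from ObjectProperty.homMk (homOfLE inf_le_right)).op) (hs' j).symm).trans ?_
        exact ((res_res _ _ _).trans (map_eq _ _ _)).trans ((res_res _ _ _).symm)
      obtain ⟨s, hs1, hs2⟩ := hQglue (V 0)
        (⟨⨆ i : Fin n, (V i.succ).obj, sup_mem n fun i => V i.succ⟩ :
          ObjectProperty.FullSubcategory (· ∈ B)) (a 0) s' key
      have hWsup : W = ⟨(V 0).obj ⊔ (⟨⨆ i : Fin n, (V i.succ).obj,
          sup_mem n fun i => V i.succ⟩ : ObjectProperty.FullSubcategory (· ∈ B)).obj,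
          hsup _ (V 0).property _ (sup_mem n fun i => V i.succ)⟩ :=
        ext (le_antisymm (hW.trans (le_of_eq (fin_succ_sup n fun i => (V i).obj)))
          (sup_le (hle 0) (iSup_le fun i => hle i.succ)))
      subst hWsup
      refine ⟨s, ?_⟩
      intro i
      refine Fin.cases ?_ ?_ i
      · exact (map_eq _ _ _).trans hs1
      · intro j
        have e2 := congrArg (Q.map (show V j.succ ⟶ (⟨⨆ i : Fin n, (V i.succ).obj,
          sup_mem n fun i => V i.succ⟩ : ObjectProperty.FullSubcategory (· ∈ B)) from
          ObjectProperty.homMk (homOfLE (le_iSup (fun k : Fin n => (V k.succ).obj) j))).op) hs2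
        exact (((res_res _ _ _).trans (map_eq _ _ _)).symm.trans e2).trans (hs' j)
  -- the main argument
  intro U S hS x hx
  obtain ⟨ι, hfin, V0, hle0, hmem, hU⟩ := (hJ U S).mp hS
  haveI := hfin
  obtain ⟨n, ⟨e⟩⟩ := Finite.exists_equiv_fin ι
  have hsup' : (⨆ i : Fin n, (V0 (e.symm i)).obj) = U.obj :=
    (Equiv.iSup_comp (g := fun k => (V0 k).obj) e.symm).trans hU
  obtain ⟨s, hs⟩ := exi n (fun i => V0 (e.symm i)) U (fun i => hle0 _)
    (le_of_eq hsup'.symm)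
    (fun i => x (show V0 (e.symm i) ⟶ U from ObjectProperty.homMk (homOfLE (hle0 (e.symm i)))) (hmem (e.symm i)))
    (fun i j => hx (show _ ⟶ V0 (e.symm i) from ObjectProperty.homMk (homOfLE inf_le_left))
      (show _ ⟶ V0 (e.symm j) from ObjectProperty.homMk (homOfLE inf_le_right))
      (hmem (e.symm i)) (hmem (e.symm j)) (hom_ss _ _))
  refine ⟨s, ?_, ?_⟩
  · intro Y f hf
    have hYle : Y.obj ≤ U.obj := leOfHom f.hom
    refine un n (fun i => ⟨Y.obj ⊓ (V0 (e.symm i)).obj,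
        hinf _ Y.property _ (V0 (e.symm i)).property⟩) Y (fun i => inf_le_left)
      ?_ _ _ ?_
    · calc Y.obj ≤ Y.obj ⊓ U.obj := le_inf le_rfl hYle
        _ = Y.obj ⊓ ⨆ i, (V0 (e.symm i)).obj := by rw [hsup']
        _ = ⨆ i, Y.obj ⊓ (V0 (e.symm i)).obj := inf_iSup_eq _ _
    · intro i
      calc Q.map (show _ ⟶ Y from ObjectProperty.homMk (homOfLE inf_le_left)).op (Q.map f.op s)
          = Q.map (show _ ⟶ Y from ObjectProperty.homMk (homOfLE inf_le_left)).op
            (Q.map (show Y ⟶ U from ObjectProperty.homMk (homOfLE hYle)).op s) := by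
            rw [hom_ss (show Y ⟶ U from ObjectProperty.homMk (homOfLE hYle)) f]
        _ = Q.map (show _ ⟶ U from ObjectProperty.homMk (homOfLE (inf_le_left.trans hYle))).op s :=
            res_res _ _ _
        _ = Q.map (show _ ⟶ V0 (e.symm i) from ObjectProperty.homMk (homOfLE inf_le_right)).op
            (Q.map (show V0 (e.symm i) ⟶ U from ObjectProperty.homMk (homOfLE (hle0 (e.symm i)))).op s) :=
            ((res_res _ _ _).trans (map_eq _ _ _)).symm
        _ = Q.map (show _ ⟶ V0 (e.symm i) from ObjectProperty.homMk (homOfLE inf_le_right)).op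
            (x (show V0 (e.symm i) ⟶ U from ObjectProperty.homMk (homOfLE (hle0 (e.symm i))))
              (hmem (e.symm i))) := by rw [hs i]
        _ = Q.map (show _ ⟶ Y from ObjectProperty.homMk (homOfLE inf_le_left)).op (x f hf) :=
            (hx (show _ ⟶ Y from ObjectProperty.homMk (homOfLE inf_le_left))
              (show _ ⟶ V0 (e.symm i) from ObjectProperty.homMk (homOfLE inf_le_right))
              hf (hmem (e.symm i)) (hom_ss _ _)).symm
  · intro t ht
    refine un n (fun i => V0 (e.symm i)) U (fun i => hle0 _)
      (le_of_eq hsup'.symm) t s ?_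
    intro i
    calc Q.map (show V0 (e.symm i) ⟶ U from ObjectProperty.homMk (homOfLE (hle0 (e.symm i)))).op t
        = x (show V0 (e.symm i) ⟶ U from ObjectProperty.homMk (homOfLE (hle0 (e.symm i)))) (hmem (e.symm i)) :=
          ht _ (hmem (e.symm i))
      _ = Q.map (show V0 (e.symm i) ⟶ U from ObjectProperty.homMk (homOfLE (hle0 (e.symm i)))).op s :=
          (hs i).symm

/-- The sheaf criterion (Proposition 1.4(i)): on the site of a family `B` of open subsets
of a topological space (containing `∅`, stable under finite unions and intersections),
with the Grothendieck topology of finite coverings, a presheaf of abelian groups `F`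
with `F(∅) = 0` satisfying the Mayer–Vietoris exactness
`0 → F(U₁ ∪ U₂) → F(U₁) ⊕ F(U₂) → F(U₁ ∩ U₂)` is a sheaf. -/
theorem sheaf_criterion_finite_coverings
    {X : Type} [TopologicalSpace X] (B : Set (Opens X))
    (hbot : ⊥ ∈ B)
    (hsup : ∀ U ∈ B, ∀ V ∈ B, U ⊔ V ∈ B)
    (hinf : ∀ U ∈ B, ∀ V ∈ B, U ⊓ V ∈ B)
    (J : GrothendieckTopology (ObjectProperty.FullSubcategory (· ∈ B)))
    -- `J` is the topology of finite coverings: a sieve covers `U` iff it contains a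
    -- finite family of members of `B` whose union is `U`.
    (hJ : ∀ (U : ObjectProperty.FullSubcategory (· ∈ B)) (S : Sieve U), S ∈ J U ↔
      ∃ (ι : Type) (_ : Finite ι) (V : ι → ObjectProperty.FullSubcategory (· ∈ B))
        (hle : ∀ i, (V i).obj ≤ U.obj),
        (∀ i, S.arrows (show V i ⟶ U from ObjectProperty.homMk (homOfLE (hle i)))) ∧ (⨆ i, (V i).obj) = U.obj)
    (F : (ObjectProperty.FullSubcategory (· ∈ B))ᵒᵖ ⥤ AddCommGrpCat)
    -- `F(∅) = 0`
    (hF0 : Subsingleton (F.obj (op ⟨⊥, hbot⟩)))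
    -- exactness of `0 → F(U₁ ∪ U₂) → F(U₁) ⊕ F(U₂) → F(U₁ ∩ U₂)`:
    -- injectivity of the pair of restrictions, and the kernel of the difference of the
    -- restrictions to `U₁ ∩ U₂` is contained in the image of `F(U₁ ∪ U₂)`
    (hinj : ∀ (U₁ U₂ : ObjectProperty.FullSubcategory (· ∈ B))
      (s t : F.obj (op (⟨U₁.obj ⊔ U₂.obj, hsup _ U₁.property _ U₂.property⟩ :
        ObjectProperty.FullSubcategory (· ∈ B)))),
      F.map (show (U₁ : ObjectProperty.FullSubcategory (· ∈ B)) ⟶ ⟨U₁.obj ⊔ U₂.obj, hsup _ U₁.property _ U₂.property⟩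
        from ObjectProperty.homMk (homOfLE le_sup_left)).op s =
        F.map (show (U₁ : ObjectProperty.FullSubcategory (· ∈ B)) ⟶ ⟨U₁.obj ⊔ U₂.obj, hsup _ U₁.property _ U₂.property⟩
          from ObjectProperty.homMk (homOfLE le_sup_left)).op t →
      F.map (show (U₂ : ObjectProperty.FullSubcategory (· ∈ B)) ⟶ ⟨U₁.obj ⊔ U₂.obj, hsup _ U₁.property _ U₂.property⟩
        from ObjectProperty.homMk (homOfLE le_sup_right)).op s =
        F.map (show (U₂ : ObjectProperty.FullSubcategory (· ∈ B)) ⟶ ⟨U₁.obj ⊔ U₂.obj, hsup _ U₁.property _ U₂.property⟩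
          from ObjectProperty.homMk (homOfLE le_sup_right)).op t →
      s = t)
    (hglue : ∀ (U₁ U₂ : ObjectProperty.FullSubcategory (· ∈ B))
      (a : F.obj (op U₁)) (b : F.obj (op U₂)),
      F.map (show (⟨U₁.obj ⊓ U₂.obj, hinf _ U₁.property _ U₂.property⟩ :
          ObjectProperty.FullSubcategory (· ∈ B)) ⟶ U₁ from ObjectProperty.homMk (homOfLE inf_le_left)).op a =
        F.map (show (⟨U₁.obj ⊓ U₂.obj, hinf _ U₁.property _ U₂.property⟩ :
          ObjectProperty.FullSubcategory (· ∈ B)) ⟶ U₂ from ObjectProperty.homMk (homOfLE inf_le_right)).op b →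
      ∃ s : F.obj (op (⟨U₁.obj ⊔ U₂.obj, hsup _ U₁.property _ U₂.property⟩ :
          ObjectProperty.FullSubcategory (· ∈ B))),
        F.map (show (U₁ : ObjectProperty.FullSubcategory (· ∈ B)) ⟶ ⟨U₁.obj ⊔ U₂.obj, hsup _ U₁.property _ U₂.property⟩
          from ObjectProperty.homMk (homOfLE le_sup_left)).op s = a ∧
        F.map (show (U₂ : ObjectProperty.FullSubcategory (· ∈ B)) ⟶ ⟨U₁.obj ⊔ U₂.obj, hsup _ U₁.property _ U₂.property⟩
          from ObjectProperty.homMk (homOfLE le_sup_right)).op s = b) :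
    Presheaf.IsSheaf J F := by
  intro E
  apply aux_sheaf_criterion B hbot hsup hinf J hJ (F ⋙ coyoneda.obj (op E))
  · -- hQ0
    intro s t
    dsimp only [Functor.comp_obj, Functor.flip_obj_obj, yoneda_obj_obj, unop_op] at s t ⊢
    refine AddCommGrpCat.ext fun v => ?_
    exact @Subsingleton.elim _ hF0 _ _
  · -- hQne
    exact ⟨(0 : E ⟶ F.obj (op ⟨⊥, hbot⟩))⟩
  · -- hQinj
    intro U₁ U₂ s t h₁ h₂
    dsimp only [Functor.comp_obj, Functor.flip_obj_obj, yoneda_obj_obj, Functor.comp_map,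
      Functor.flip_obj_map, yoneda_map_app, unop_op] at s t h₁ h₂ ⊢
    refine AddCommGrpCat.ext fun v => ?_
    refine hinj U₁ U₂ (s v) (t v) ?_ ?_
    · exact congrArg (fun k => k v) h₁
    · exact congrArg (fun k => k v) h₂
  · -- hQglue
    intro U₁ U₂ a b hab
    dsimp only [Functor.comp_obj, Functor.flip_obj_obj, yoneda_obj_obj, Functor.comp_map,
      Functor.flip_obj_map, yoneda_map_app, unop_op] at a b hab ⊢
    choose σ hσ₁ hσ₂ using fun v : E =>
      hglue U₁ U₂ (a v) (b v) (congrArg (fun k => k v) hab)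
    have hadd : ∀ v w : E, σ (v + w) = σ v + σ w := by
      intro v w
      refine hinj U₁ U₂ _ _ ?_ ?_
      · simp only [map_add, hσ₁]
      · simp only [map_add, hσ₂]
    refine ⟨show E ⟶ _ from AddCommGrpCat.ofHom (AddMonoidHom.mk' σ hadd), ?_, ?_⟩
    · exact AddCommGrpCat.ext fun v => hσ₁ v
    · exact AddCommGrpCat.ext fun v => hσ₂ v
end

section
/- Let U₁ and U₂ be bounded open subsets of ℝⁿ and set U = U₁ ∪ U₂. For an open set V write d_V(x) = dist(x, ℝⁿ \ V). Assume the Lojasiewicz inequality: there exist C > 0 and an integer N ≥ 1 such that d_U(x)^N ≤ C · max(d_{U₁}(x), d_{U₂}(x)) for all x ∈ U. Let s₁, s₂ ≥ 0 and let f be a measurable function on U such that ∫_{U₁} d_{U₁}(x)^{2s₁} |f(x)|² dx < ∞ and ∫_{U₂} d_{U₂}(x)^{2s₂} |f(x)|² dx < ∞. Then, with s = max(s₁, s₂), one has ∫_U d_U(x)^{2Ns} |f(x)|² dx < ∞. -/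
open Metric MeasureTheory

lemma aux_rpow_bound {a M p q : ℝ} (ha : 0 ≤ a) (haM : a ≤ M) (hM : 1 ≤ M)
    (hq : 0 ≤ q) (hqp : q ≤ p) : a ^ p ≤ M ^ (p - q) * a ^ q := by
  rcases eq_or_lt_of_le ha with h0 | h0
  · rcases eq_or_lt_of_le (hq.trans hqp) with hp | hp
    · have hq0 : q = 0 := le_antisymm (hqp.trans hp.symm.le) hq
      simp [← h0, ← hp, hq0]
    · rw [← h0, Real.zero_rpow hp.ne']
      positivity
  · have e : a ^ p = a ^ (p - q) * a ^ q := by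
      rw [← Real.rpow_add h0]
      norm_num
    rw [e]
    exact
        mul_le_mul_of_nonneg_right (Real.rpow_le_rpow ha haM (by linarith))
          (Real.rpow_nonneg ha _)

lemma glue_side {n : ℕ} {U W A : Set (EuclideanSpace ℝ (Fin n))}
    {C M : ℝ} (hC : 0 < C) (hM : 1 ≤ M) {N : ℕ} {s t : ℝ}
    (ht : 0 ≤ t) (hts : t ≤ s)
    (hA : MeasurableSet A) (hAW : A ⊆ W)
    (hdM : ∀ x ∈ A, infDist x Wᶜ ≤ M)
    (hLoja : ∀ x ∈ A, infDist x Uᶜ ^ (N : ℝ) ≤ C * infDist x Wᶜ)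
    {f : EuclideanSpace ℝ (Fin n) → ℝ} (hf : Measurable f)
    (hW : IntegrableOn (fun x => infDist x Wᶜ ^ (2 * t) * |f x| ^ 2) W) :
    IntegrableOn (fun x => infDist x Uᶜ ^ (2 * (N : ℝ) * s) * |f x| ^ 2) A := by
  have h2s : (0:ℝ) ≤ 2 * s := by linarith
  set K : ℝ := C ^ (2 * s) * M ^ (2 * s - 2 * t) with hK
  apply Integrable.mono' (((hW.mono_set hAW).const_mul K))
  · have hexp : (0:ℝ) ≤ 2 * (N:ℝ) * s :=
      mul_nonneg (mul_nonneg (by norm_num) (Nat.cast_nonneg N)) (ht.trans hts)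
    exact ((((continuous_infDist_pt Uᶜ).rpow_const fun x => Or.inr hexp).measurable).mul
      ((hf.abs).pow_const 2)).aestronglyMeasurable
  · refine (ae_restrict_mem hA).mono fun x hx => ?_
    have hF : (0:ℝ) ≤ |f x| ^ 2 := by positivity
    have hnn : (0:ℝ) ≤ infDist x Uᶜ ^ (2 * (N:ℝ) * s) := Real.rpow_nonneg infDist_nonneg _
    rw [Real.norm_eq_abs, abs_of_nonneg (mul_nonneg hnn hF)]
    have h1 : infDist x Uᶜ ^ (2 * (N:ℝ) * s)
        ≤ C ^ (2 * s) * (M ^ (2 * s - 2 * t) * infDist x Wᶜ ^ (2 * t)) := by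
      calc infDist x Uᶜ ^ (2 * (N:ℝ) * s) = (infDist x Uᶜ ^ (N:ℝ)) ^ (2 * s) := by
            rw [← Real.rpow_mul infDist_nonneg]; ring_nf
      _ ≤ (C * infDist x Wᶜ) ^ (2 * s) :=
            Real.rpow_le_rpow (Real.rpow_nonneg infDist_nonneg _) (hLoja x hx) h2s
      _ = C ^ (2 * s) * infDist x Wᶜ ^ (2 * s) := Real.mul_rpow hC.le infDist_nonneg
      _ ≤ C ^ (2 * s) * (M ^ (2 * s - 2 * t) * infDist x Wᶜ ^ (2 * t)) :=
            mul_le_mul_of_nonneg_left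
              (aux_rpow_bound infDist_nonneg (hdM x hx) hM (by linarith) (by linarith))
              (Real.rpow_nonneg hC.le _)
    calc infDist x Uᶜ ^ (2 * (N:ℝ) * s) * |f x| ^ 2
        ≤ (C ^ (2 * s) * (M ^ (2 * s - 2 * t) * infDist x Wᶜ ^ (2 * t))) * |f x| ^ 2 :=
          mul_le_mul_of_nonneg_right h1 hF
      _ = K * (infDist x Wᶜ ^ (2 * t) * |f x| ^ 2) := by rw [hK]; ring

lemma bounded_infDist_bound {n : ℕ} {W : Set (EuclideanSpace ℝ (Fin n))}
    (hWb : Bornology.IsBounded W) :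
    ∃ M : ℝ, 1 ≤ M ∧ ∀ x ∈ W, infDist x Wᶜ ≤ M := by
  obtain ⟨R, hR⟩ := hWb.subset_closedBall 0
  rcases Set.eq_empty_or_nonempty Wᶜ with h | ⟨q, hq⟩
  · exact ⟨1, le_refl 1, fun x _ => by simp [h, Metric.infDist_empty]⟩
  · refine ⟨max 1 (R + dist (0:EuclideanSpace ℝ (Fin n)) q), le_max_left _ _,
      fun x hx => ?_⟩
    have h1 : infDist x Wᶜ ≤ dist x q := infDist_le_dist_of_mem hq
    have h2 : dist x q ≤ dist x 0 + dist 0 q := dist_triangle _ _ _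
    have h3 : dist x 0 ≤ R := by simpa using hR hx
    exact h1.trans (h2.trans (le_max_of_le_right (by linarith)))

/-- The gluing step for temperate `L²` functions (Lemma 1.9(i)): if `U = U₁ ∪ U₂` with
the Łojasiewicz inequality `d_U(x)^N ≤ C · max(d_{U₁}(x), d_{U₂}(x))`, and `f ∈ L^{2,s₁}(U₁)`
and `f ∈ L^{2,s₂}(U₂)`, then `f ∈ L^{2,Ns}(U)` where `s = max(s₁,s₂)`. -/
theorem L2_temperate_glue
    {n : ℕ} (U₁ U₂ : Set (EuclideanSpace ℝ (Fin n)))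
    (hU₁o : IsOpen U₁) (hU₂o : IsOpen U₂)
    (hU₁b : Bornology.IsBounded U₁) (hU₂b : Bornology.IsBounded U₂)
    (C : ℝ) (hC : 0 < C) (N : ℕ) (hN : 1 ≤ N)
    -- Łojasiewicz inequality for the covering `U = U₁ ∪ U₂`
    (hLoja : ∀ x ∈ U₁ ∪ U₂,
      infDist x (U₁ ∪ U₂)ᶜ ^ (N : ℝ) ≤ C * max (infDist x U₁ᶜ) (infDist x U₂ᶜ))
    (s₁ s₂ : ℝ) (hs₁ : 0 ≤ s₁) (hs₂ : 0 ≤ s₂)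
    (f : EuclideanSpace ℝ (Fin n) → ℝ) (hf : Measurable f)
    (h₁ : IntegrableOn (fun x => infDist x U₁ᶜ ^ (2 * s₁) * |f x| ^ 2) U₁)
    (h₂ : IntegrableOn (fun x => infDist x U₂ᶜ ^ (2 * s₂) * |f x| ^ 2) U₂) :
    IntegrableOn
      (fun x => infDist x (U₁ ∪ U₂)ᶜ ^ (2 * (N : ℝ) * max s₁ s₂) * |f x| ^ 2)
      (U₁ ∪ U₂) := by
  set A : Set (EuclideanSpace ℝ (Fin n)) :=
    U₁ ∩ {x | infDist x U₂ᶜ ≤ infDist x U₁ᶜ} with hAdef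
  set B : Set (EuclideanSpace ℝ (Fin n)) := U₂ \ A with hBdef
  have hAmeas : MeasurableSet A :=
    hU₁o.measurableSet.inter
      (measurableSet_le (continuous_infDist_pt U₂ᶜ).measurable
        (continuous_infDist_pt U₁ᶜ).measurable)
  have hBmeas : MeasurableSet B := hU₂o.measurableSet.diff hAmeas
  have hcover : U₁ ∪ U₂ ⊆ A ∪ B := by
    intro x hx
    by_cases hxA : x ∈ A
    · exact Or.inl hxA
    · refine Or.inr ⟨?_, hxA⟩
      rcases hx with hx1 | hx2
      · by_contra hx2
        have hd2 : infDist x U₂ᶜ = 0 := infDist_zero_of_mem hx2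
        exact hxA ⟨hx1, by simp [hd2, infDist_nonneg]⟩
      · exact hx2
  obtain ⟨M₁, hM₁, hdM₁⟩ := bounded_infDist_bound hU₁b
  obtain ⟨M₂, hM₂, hdM₂⟩ := bounded_infDist_bound hU₂b
  have hIA : IntegrableOn
      (fun x => infDist x (U₁ ∪ U₂)ᶜ ^ (2 * (N : ℝ) * max s₁ s₂) * |f x| ^ 2) A := by
    refine glue_side hC hM₁ hs₁ (le_max_left s₁ s₂) hAmeas
      (fun x hx => hx.1) (fun x hx => hdM₁ x hx.1) (fun x hx => ?_) hf h₁
    have := hLoja x (Or.inl hx.1)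
    rwa [max_eq_left hx.2] at this
  have hIB : IntegrableOn
      (fun x => infDist x (U₁ ∪ U₂)ᶜ ^ (2 * (N : ℝ) * max s₁ s₂) * |f x| ^ 2) B := by
    refine glue_side hC hM₂ hs₂ (le_max_right s₁ s₂) hBmeas
      (fun x hx => hx.1) (fun x hx => hdM₂ x hx.1) (fun x hx => ?_) hf h₂
    have hle : infDist x U₁ᶜ ≤ infDist x U₂ᶜ := by
      by_cases hx1 : x ∈ U₁
      · by_contra hlt
        exact hx.2 ⟨hx1, le_of_not_ge hlt⟩
      · have hd1 : infDist x U₁ᶜ = 0 := infDist_zero_of_mem hx1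
        rw [hd1]; exact infDist_nonneg
    have := hLoja x (Or.inr hx.1)
    rwa [max_eq_right hle] at this
  exact (hIA.union hIB).mono_set hcover
end

section
/- Let U₁ and U₂ be bounded open subsets of ℝⁿ and set U = U₁ ∪ U₂. For an open set V write d_V(x) = dist(x, ℝⁿ \ V). Assume the Lojasiewicz inequality: there exist C > 0 and an integer N ≥ 1 such that d_U(x)^N ≤ C · max(d_{U₁}(x), d_{U₂}(x)) for all x ∈ U. Let s₁, s₂ ≥ 0 and let f be a function on U such that sup_{x∈U₁} d_{U₁}(x)^{s₁} |f(x)| < ∞ and sup_{x∈U₂} d_{U₂}(x)^{s₂} |f(x)| < ∞. Then, with s = max(s₁, s₂), one has sup_{x∈U} d_U(x)^{Ns} |f(x)| < ∞. -/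
open Metric

lemma bound_infDist {α : Type*} [MetricSpace α] {W : Set α}
    (hW : Bornology.IsBounded W) (T : Set α) :
    ∃ D : ℝ, ∀ x ∈ W, infDist x T ≤ D := by
  rcases T.eq_empty_or_nonempty with rfl | ⟨y, hy⟩
  · exact ⟨0, fun x _ => by simp [infDist_empty]⟩
  · obtain ⟨R, hR⟩ := hW.subset_closedBall y
    exact ⟨R, fun x hx => (infDist_le_dist_of_mem hy).trans (hR hx)⟩

lemma glue_branch {d di D s si C Mi M' F : ℝ}
    (hd : 0 ≤ d) (hdi : 0 < di) (hdiD : di ≤ D) (hD : 1 ≤ D)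
    (hsi : 0 ≤ si) (hsis : si ≤ s) (hC : 0 < C)
    {N : ℕ} (hLo : d ^ (N : ℝ) ≤ C * di)
    (hF : 0 ≤ F) (hMi : di ^ si * F ≤ Mi) (hMi' : Mi ≤ M') :
    d ^ ((N : ℝ) * s) * F ≤ C ^ s * (D ^ s * M') := by
  have hs : 0 ≤ s := hsi.trans hsis
  have hMi0 : 0 ≤ Mi := le_trans (by positivity) hMi
  have hM'0 : 0 ≤ M' := hMi0.trans hMi'
  have h1 : d ^ ((N : ℝ) * s) = (d ^ (N : ℝ)) ^ s := Real.rpow_mul hd _ _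
  have h2 : (d ^ (N : ℝ)) ^ s ≤ (C * di) ^ s :=
    Real.rpow_le_rpow (Real.rpow_nonneg hd _) hLo hs
  have h3 : (C * di) ^ s = C ^ s * di ^ s := Real.mul_rpow hC.le hdi.le
  have h4 : di ^ s = di ^ (s - si) * di ^ si := by
    rw [← Real.rpow_add hdi]; ring_nf
  have h5 : di ^ (s - si) ≤ D ^ s := by
    calc di ^ (s - si) ≤ D ^ (s - si) :=
          Real.rpow_le_rpow hdi.le hdiD (by linarith)
      _ ≤ D ^ s := Real.rpow_le_rpow_of_exponent_le hD (by linarith)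
  calc d ^ ((N : ℝ) * s) * F ≤ (C * di) ^ s * F := by
        rw [h1]; exact mul_le_mul_of_nonneg_right h2 hF
    _ = C ^ s * (di ^ (s - si) * (di ^ si * F)) := by
        rw [h3, h4]; ring
    _ ≤ C ^ s * (D ^ s * M') := by
        have : di ^ (s - si) * (di ^ si * F) ≤ D ^ s * M' :=
          mul_le_mul h5 (hMi.trans hMi') (by positivity) (by positivity)
        exact mul_le_mul_of_nonneg_left this (by positivity)

/-- The gluing step for functions of polynomial growth: if `U = U₁ ∪ U₂` satisfies the
Łojasiewicz inequality `d_U(x)^N ≤ C · max(d_{U₁}(x), d_{U₂}(x))` and `f` has polynomial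
growth of order `s₁` on `U₁` and of order `s₂` on `U₂`, then `f` has polynomial growth of
order `N·s` on `U`, where `s = max(s₁,s₂)`. -/
theorem polynomial_growth_glue
    {n : ℕ} (U₁ U₂ : Set (EuclideanSpace ℝ (Fin n)))
    (hU₁o : IsOpen U₁) (hU₂o : IsOpen U₂)
    (hU₁b : Bornology.IsBounded U₁) (hU₂b : Bornology.IsBounded U₂)
    (C : ℝ) (hC : 0 < C) (N : ℕ) (hN : 1 ≤ N)
    -- Łojasiewicz inequality for the covering `U = U₁ ∪ U₂`
    (hLoja : ∀ x ∈ U₁ ∪ U₂,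
      infDist x (U₁ ∪ U₂)ᶜ ^ (N : ℝ) ≤ C * max (infDist x U₁ᶜ) (infDist x U₂ᶜ))
    (s₁ s₂ : ℝ) (hs₁ : 0 ≤ s₁) (hs₂ : 0 ≤ s₂)
    (f : EuclideanSpace ℝ (Fin n) → ℝ)
    (M₁ : ℝ) (h₁ : ∀ x ∈ U₁, infDist x U₁ᶜ ^ s₁ * |f x| ≤ M₁)
    (M₂ : ℝ) (h₂ : ∀ x ∈ U₂, infDist x U₂ᶜ ^ s₂ * |f x| ≤ M₂) :
    ∃ M : ℝ, ∀ x ∈ U₁ ∪ U₂,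
      infDist x (U₁ ∪ U₂)ᶜ ^ ((N : ℝ) * max s₁ s₂) * |f x| ≤ M := by
  obtain ⟨D₁, hD₁⟩ := bound_infDist hU₁b U₁ᶜ
  obtain ⟨D₂, hD₂⟩ := bound_infDist hU₂b U₂ᶜ
  set s := max s₁ s₂ with hs_def
  have hs : 0 ≤ s := hs₁.trans (le_max_left _ _)
  set D : ℝ := max (max D₁ D₂) 1 with hD_def
  have hD1 : (1 : ℝ) ≤ D := le_max_right _ _
  -- max M₁ M₂ is nonneg for relevant x; as a global bound we use max (max M₁ M₂) 0
  by_cases hsz : s = 0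
  · -- then s₁ = s₂ = 0 and the claim is just boundedness of f
    have hs₁z : s₁ = 0 := le_antisymm (hsz ▸ le_max_left _ _) hs₁
    have hs₂z : s₂ = 0 := le_antisymm (hsz ▸ le_max_right _ _) hs₂
    refine ⟨max M₁ M₂, fun x hx => ?_⟩
    rw [hsz, mul_zero, Real.rpow_zero, one_mul]
    rcases hx with hx1 | hx2
    · have := h₁ x hx1; rw [hs₁z, Real.rpow_zero, one_mul] at this
      exact this.trans (le_max_left _ _)
    · have := h₂ x hx2; rw [hs₂z, Real.rpow_zero, one_mul] at this
      exact this.trans (le_max_right _ _)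
  · have hspos : 0 < s := lt_of_le_of_ne hs (Ne.symm hsz)
    refine ⟨C ^ s * (D ^ s * max M₁ M₂), fun x hx => ?_⟩
    have hd : 0 ≤ infDist x (U₁ ∪ U₂)ᶜ := infDist_nonneg
    have hLo := hLoja x hx
    have hMmax : 0 ≤ max M₁ M₂ := by
      rcases hx with hx1 | hx2
      · exact le_trans (le_trans (mul_nonneg (Real.rpow_nonneg infDist_nonneg _) (abs_nonneg _)) (h₁ x hx1)) (le_max_left _ _)
      · exact le_trans (le_trans (mul_nonneg (Real.rpow_nonneg infDist_nonneg _) (abs_nonneg _)) (h₂ x hx2)) (le_max_right _ _)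
    by_cases hd0 : infDist x (U₁ ∪ U₂)ᶜ = 0
    · rw [hd0, Real.zero_rpow (by positivity), zero_mul]
      positivity
    · have hdpos : 0 < infDist x (U₁ ∪ U₂)ᶜ := lt_of_le_of_ne hd (Ne.symm hd0)
      have hmaxpos : 0 < max (infDist x U₁ᶜ) (infDist x U₂ᶜ) := by
        by_contra hle
        push_neg at hle
        have : C * max (infDist x U₁ᶜ) (infDist x U₂ᶜ) ≤ 0 := by
          exact mul_nonpos_of_nonneg_of_nonpos hC.le hle
        have := hLo.trans this
        have : (0:ℝ) < infDist x (U₁ ∪ U₂)ᶜ ^ (N : ℝ) :=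
          Real.rpow_pos_of_pos hdpos _
        linarith
      rcases max_cases (infDist x U₁ᶜ) (infDist x U₂ᶜ) with ⟨heq, _⟩ | ⟨heq, _⟩
      · rw [heq] at hLo hmaxpos
        have hx1 : x ∈ U₁ := by
          by_contra hxm
          have : infDist x U₁ᶜ = 0 := infDist_zero_of_mem (by simpa using hxm)
          rw [this] at hmaxpos; exact lt_irrefl _ hmaxpos
        exact glue_branch hd hmaxpos
          (le_trans (hD₁ x hx1) ((le_max_left D₁ D₂).trans (le_max_left _ _)))
          hD1 hs₁ (le_max_left _ _) hC hLo (abs_nonneg _) (h₁ x hx1) (le_max_left _ _)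
      · rw [heq] at hLo hmaxpos
        have hx2 : x ∈ U₂ := by
          by_contra hxm
          have : infDist x U₂ᶜ = 0 := infDist_zero_of_mem (by simpa using hxm)
          rw [this] at hmaxpos; exact lt_irrefl _ hmaxpos
        exact glue_branch hd hmaxpos
          (le_trans (hD₂ x hx2) ((le_max_right D₁ D₂).trans (le_max_left _ _)))
          hD1 hs₂ (le_max_right _ _) hC hLo (abs_nonneg _) (h₂ x hx2) (le_max_right _ _)
end

section
/- Let U be a bounded convex open subset of ℂ with 0 ∈ U, and write d_U(z) = dist(z, ℂ \ U). Let f be holomorphic on U with f(0) = 0, and suppose f has polynomial growth: there exist C > 0 and N ≥ 0 with |f(z)| ≤ C · d_U(z)^{-N} for all z ∈ U. Then the holomorphic function g on U defined by g(z) = f(z)/z for z ≠ 0 (and g(0) = f′(0)) also has polynomial growth: there exist C′ > 0 and M ≥ 0 with |g(z)| ≤ C′ · d_U(z)^{-M} for all z ∈ U. -/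
open Metric

/-- The temperate division lemma (local step in Lemma 2.16): on a bounded convex open
subset `U ⊆ ℂ` containing `0`, if `f` is holomorphic on `U`, vanishes at `0`, and has
polynomial growth `|f(z)| ≤ C · d_U(z)^{-N}`, then the holomorphic function
`g(z) = f(z)/z` (with `g(0) = f′(0)`) also has polynomial growth on `U`. -/
theorem temperate_division
    (U : Set ℂ) (hUo : IsOpen U) (hUc : Convex ℝ U) (hUb : Bornology.IsBounded U)
    (h0 : (0 : ℂ) ∈ U)
    (f : ℂ → ℂ) (hf : DifferentiableOn ℂ f U) (hf0 : f 0 = 0)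
    (C : ℝ) (hC : 0 < C) (N : ℝ) (hN : 0 ≤ N)
    (hgrowth : ∀ z ∈ U, ‖f z‖ ≤ C * infDist z Uᶜ ^ (-N)) :
    ∃ C' > (0 : ℝ), ∃ M ≥ (0 : ℝ), ∀ z ∈ U,
      ‖if z = 0 then deriv f 0 else f z / z‖ ≤ C' * infDist z Uᶜ ^ (-M) := by
  -- a closed ball around 0 inside U
  obtain ⟨r, hr, hrU⟩ : ∃ r > 0, closedBall (0:ℂ) r ⊆ U := by
    obtain ⟨ε, hε, h⟩ := Metric.isOpen_iff.mp hUo 0 h0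
    exact ⟨ε/2, by positivity, (closedBall_subset_ball (by linarith)).trans h⟩
  set g : ℂ → ℂ := fun z => if z = 0 then deriv f 0 else f z / z with hg
  -- g is continuous on the closed ball
  have hgc : ContinuousOn g (closedBall (0:ℂ) r) := by
    intro z hz
    rcases eq_or_ne z 0 with rfl | hz0
    · have hd : HasDerivAt f (deriv f 0) 0 :=
        (hf.differentiableAt (hUo.mem_nhds h0)).hasDerivAt
      have hslope := hasDerivAt_iff_tendsto_slope.mp hd
      have h1 : Filter.Tendsto g (nhdsWithin (0:ℂ) {(0:ℂ)}ᶜ) (nhds (deriv f 0)) := by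
        refine hslope.congr' ?_
        filter_upwards [self_mem_nhdsWithin] with w hw
        have hw' : w ≠ 0 := hw
        simp [slope, g, hw', hf0, div_eq_inv_mul]
      have h2 : ContinuousAt g 0 := by
        rw [ContinuousAt, ← nhdsNE_sup_pure, Filter.tendsto_sup]
        refine ⟨by simpa [g] using h1, ?_⟩
        simpa [g] using tendsto_pure_nhds g 0
      exact h2.continuousWithinAt
    · have hfc : ContinuousWithinAt (fun w => f w / w) (closedBall (0:ℂ) r) z :=
        ((hf.continuousOn.mono hrU).continuousWithinAt hz).div continuousWithinAt_id hz0
      refine hfc.congr_of_eventuallyEq ?_ (by simp [g, hz0])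
      have hne : ∀ᶠ w in nhds z, w ≠ (0:ℂ) :=
        (isOpen_compl_singleton.eventually_mem hz0)
      filter_upwards [hne.filter_mono nhdsWithin_le_nhds] with w hw
      simp [g, hw]
  -- bound on the ball
  obtain ⟨K, hK⟩ := (isCompact_closedBall (0:ℂ) r).exists_bound_of_continuousOn hgc
  set K' : ℝ := max K 0 with hK'
  have hK'0 : 0 ≤ K' := le_max_right _ _
  have hKb : ∀ x ∈ closedBall (0:ℂ) r, ‖g x‖ ≤ K' := fun x hx =>
    (hK x hx).trans (le_max_left _ _)
  -- an upper bound for infDist on U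
  obtain ⟨R, hR⟩ := hUb.subset_closedBall 0
  set R' : ℝ := max R 0 with hR'
  set w : ℂ := ((R' + 1 : ℝ) : ℂ) with hw
  have hwU : w ∈ Uᶜ := by
    intro hwmem
    have := hR hwmem
    simp only [mem_closedBall, dist_zero_right] at this
    have hnw : ‖w‖ = R' + 1 := by
      rw [hw, Complex.norm_real, Real.norm_eq_abs, abs_of_nonneg (by positivity : (0:ℝ) ≤ R' + 1)]
    rw [hnw] at this
    have : R ≤ R' := le_max_left _ _
    linarith [le_max_left R 0, hR']
  set D : ℝ := 2 * R' + 1 with hD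
  have hD0 : 0 < D := by positivity
  have hdle : ∀ z ∈ U, infDist z Uᶜ ≤ D := by
    intro z hz
    refine (infDist_le_dist_of_mem hwU).trans ?_
    have h1 : dist z w ≤ ‖z‖ + ‖w‖ := by
      simpa [dist_eq_norm] using norm_sub_le z w
    have h2 : ‖z‖ ≤ R' := by
      have := hR hz
      simp only [mem_closedBall, dist_zero_right] at this
      exact this.trans (le_max_left _ _)
    have h3 : ‖w‖ = R' + 1 := by
      rw [hw, Complex.norm_real, Real.norm_eq_abs, abs_of_nonneg (by positivity : (0:ℝ) ≤ R' + 1)]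
    rw [h3] at h1
    linarith
  have hdpos : ∀ z ∈ U, 0 < infDist z Uᶜ := fun z hz =>
    (IsClosed.notMem_iff_infDist_pos hUo.isClosed_compl ⟨w, hwU⟩).mp (by simpa using hz)
  -- the final constant
  refine ⟨max (C / (r/2)) ((K' + 1) * D ^ N), lt_max_of_lt_left (by positivity), N, hN, ?_⟩
  intro z hz
  have hd1 : 0 < infDist z Uᶜ := hdpos z hz
  have hd2 : infDist z Uᶜ ≤ D := hdle z hz
  have hrpow : D ^ (-N) ≤ infDist z Uᶜ ^ (-N) :=
    Real.rpow_le_rpow_of_nonpos hd1 hd2 (neg_nonpos.mpr hN)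
  have hrpow0 : (0:ℝ) ≤ infDist z Uᶜ ^ (-N) := Real.rpow_nonneg hd1.le _
  rcases le_or_gt ‖z‖ r with hzr | hzr
  · -- z in the closed ball: use the bound K'
    have hb : ‖g z‖ ≤ K' := hKb z (by simpa [mem_closedBall, dist_zero_right])
    calc ‖if z = 0 then deriv f 0 else f z / z‖ ≤ K' := hb
      _ = K' * (D ^ N * D ^ (-N)) := by
          rw [← Real.rpow_add hD0, add_neg_cancel, Real.rpow_zero, mul_one]
      _ = (K' * D ^ N) * D ^ (-N) := by ring
      _ ≤ ((K' + 1) * D ^ N) * (infDist z Uᶜ ^ (-N)) := by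
          have hDN : (0:ℝ) ≤ D ^ N := Real.rpow_nonneg hD0.le _
          have hDN' : (0:ℝ) ≤ D ^ (-N) := Real.rpow_nonneg hD0.le _
          exact mul_le_mul (by nlinarith) hrpow hDN' (by nlinarith)
      _ ≤ max (C / (r/2)) ((K' + 1) * D ^ N) * (infDist z Uᶜ ^ (-N)) := by
          exact mul_le_mul_of_nonneg_right (le_max_right _ _) hrpow0
  · -- z outside the ball: use the growth bound on f
    have hz0 : z ≠ 0 := by
      intro h; rw [h] at hzr; simp at hzr; linarith
    rw [if_neg hz0]
    rw [norm_div]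
    have hzabs : r < ‖z‖ := by simpa using hzr
    have hnum : ‖f z‖ ≤ C * infDist z Uᶜ ^ (-N) := hgrowth z hz
    calc ‖f z‖ / ‖z‖
        ≤ (C * infDist z Uᶜ ^ (-N)) / (r/2) := by
          apply div_le_div₀ (by positivity) hnum (by linarith) (by linarith)
      _ = (C / (r/2)) * infDist z Uᶜ ^ (-N) := by ring
      _ ≤ max (C / (r/2)) ((K' + 1) * D ^ N) * (infDist z Uᶜ ^ (-N)) :=
          mul_le_mul_of_nonneg_right (le_max_left _ _) hrpow0
end

section
/- Let E be a real normed vector space and let U ⊆ E be a convex set. Then the function x ↦ dist(x, E \ U) is concave on U: for all x, y ∈ U and t ∈ [0,1], dist(t·x + (1−t)·y, E \ U) ≥ t · dist(x, E \ U) + (1−t) · dist(y, E \ U). -/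
open Metric

lemma ball_subset_of_infDist {E : Type*} [NormedAddCommGroup E]
    {U : Set E} {x : E} (hx : x ∈ U) : ball x (infDist x Uᶜ) ⊆ U := by
  intro p hp
  by_contra hpU
  have h := infDist_le_dist_of_mem (x := x) (show p ∈ Uᶜ from hpU)
  rw [mem_ball, dist_comm] at hp
  exact absurd h (not_le.2 hp)

/-- The distance to the complement of a convex set is concave on the set: for a convex
`U` in a real normed vector space, `x ↦ dist(x, E \ U)` is concave on `U`. -/
theorem concaveOn_infDist_compl
    {E : Type*} [NormedAddCommGroup E] [NormedSpace ℝ E]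
    (U : Set E) (hU : Convex ℝ U) :
    ConcaveOn ℝ U (fun x => infDist x Uᶜ) := by
  refine ⟨hU, fun x hx y hy a b ha hb hab => ?_⟩
  rcases Set.eq_empty_or_nonempty Uᶜ with hc | hc
  · simp [hc, infDist_empty]
  set dx := infDist x Uᶜ with hdx
  set dy := infDist y Uᶜ with hdy
  set r := a * dx + b * dy with hr
  have hdx0 : 0 ≤ dx := infDist_nonneg
  have hdy0 : 0 ≤ dy := infDist_nonneg
  have hr0 : 0 ≤ r := by positivity
  set z := a • x + b • y with hz
  -- Key: ball z r ⊆ U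
  have hball : ball z r ⊆ U := by
    intro u hu
    rcases eq_or_lt_of_le hr0 with hre | hre
    · simp [← hre] at hu
    set v := u - z with hv
    have hvn : ‖v‖ < r := by
      rw [hv, ← dist_eq_norm]; exact mem_ball.1 hu
    have key : ∀ w : E, w ∈ U → ∀ d : ℝ, 0 ≤ d → d ≤ infDist w Uᶜ →
        w + (d / r) • v ∈ U := by
      intro w hw d hd0 hdle
      rcases eq_or_lt_of_le hd0 with hd | hd
      · simpa [← hd] using hw
      · apply ball_subset_of_infDist hw
        rw [mem_ball, dist_eq_norm]
        simp only [add_sub_cancel_left]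
        rw [norm_smul, Real.norm_eq_abs, abs_of_nonneg (by positivity)]
        calc d / r * ‖v‖ < d / r * r := by
              apply mul_lt_mul_of_pos_left hvn (by positivity)
          _ = d := by field_simp
          _ ≤ infDist w Uᶜ := hdle
    have h1 := key x hx dx hdx0 le_rfl
    have h2 := key y hy dy hdy0 le_rfl
    have : u = a • (x + (dx / r) • v) + b • (y + (dy / r) • v) := by
      have : a • ((dx / r) • v) + b • ((dy / r) • v) = v := by
        rw [smul_smul, smul_smul, ← add_smul]
        have : a * (dx / r) + b * (dy / r) = 1 := by
          field_simp [hr]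
          exact hr.symm
        rw [this, one_smul]
      rw [smul_add, smul_add, hv]
      rw [show a • x + a • ((dx/r) • v) + (b • y + b • ((dy/r) • v))
          = (a • x + b • y) + (a • ((dx/r) • v) + b • ((dy/r) • v)) by abel]
      rw [this, hv, hz]
      abel
    rw [this]
    exact hU h1 h2 ha hb hab
  -- conclude
  by_contra hlt
  push_neg at hlt
  obtain ⟨w, hw, hwd⟩ := (infDist_lt_iff hc).1 hlt
  exact hw (hball (mem_ball.2 (by rw [dist_comm]; exact hwd)))
end
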